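/- arXiv:2210.16435 — 3 statements merged into one kernel-verified Lean document; each statement's English description precedes it below -/
import Mathlib

section
/- The clustering is group fair if and only if F_0^T H = 0, where F_0 = G - 1_n z^T with z = (G^T 1_n)/n, and H is the cluster indicator matrix. -/
/-!
Writing `G`, `H` for the group and cluster indicator matrices, `Gᵀ H` counts the members of each
group in each cluster and `1ᵀ H` counts the cluster sizes, so the entry `(s, ℓ)` of
`F₀ᵀ H = Gᵀ H - z (1ᵀ H)` is `|V_s ∩ C_ℓ| - (|V_s| / n) |C_ℓ|`. Since clusters are nonempty, this
vanishes exactly when the fairness equation for `(s, ℓ)` holds.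
-/

open Matrix

namespace Matrix

theorem transpose_sub_vecMulVec_one_mul {ι α β R : Type*} [Fintype ι] [CommRing R]
    (G : Matrix ι α R) (z : α → R) (H : Matrix ι β R) :
    (G - vecMulVec 1 z)ᵀ * H = Gᵀ * H - vecMulVec z (1 ᵥ* H) := by
  rw [transpose_sub, Matrix.sub_mul, transpose_vecMulVec, vecMulVec_mul]

variable {ι α β R : Type*} [Fintype ι] [DecidableEq α] [DecidableEq β]

def indicatorMatrix [Zero R] [One R] (f : ι → α) : Matrix ι α R :=
  of fun i a => if f i = a then 1 else 0

theorem one_vecMul_indicatorMatrix [NonAssocSemiring R] (f : ι → α) :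
    1 ᵥ* (indicatorMatrix f : Matrix ι α R) =
      fun a => ((Finset.univ.filter (f · = a)).card : R) := by
  ext a
  simp [vecMul, dotProduct, indicatorMatrix, Finset.sum_boole]

theorem indicatorMatrix_transpose_mul_indicatorMatrix [NonAssocSemiring R] (f : ι → α)
    (p : ι → β) :
    (indicatorMatrix f : Matrix ι α R)ᵀ * (indicatorMatrix p : Matrix ι β R) =
      of fun a b => ((Finset.univ.filter fun i => f i = a ∧ p i = b).card : R) := by
  ext a b
  simp only [indicatorMatrix, mul_apply, transpose_apply, of_apply, ite_mul, one_mul, zero_mul,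
    ← ite_and, Finset.sum_boole]

end Matrix

theorem stmt5_general (n k h : ℕ)
    (c : Fin n → Fin k) (hc : Function.Surjective c)
    (g : Fin n → Fin h)
    (G : Matrix (Fin n) (Fin h) ℝ)
    (hG : ∀ i s, G i s = if g i = s then 1 else 0)
    (H : Matrix (Fin n) (Fin k) ℝ)
    (hH : ∀ i l, H i l = if c i = l then 1 else 0)
    (z : Fin h → ℝ) (hz : z = fun s => (Gᵀ.mulVec (fun _ => 1)) s / n)
    (F0 : Matrix (Fin n) (Fin h) ℝ)
    (hF0 : ∀ i s, F0 i s = G i s - z s) :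
    (∀ s l, ((Finset.univ.filter fun i => g i = s ∧ c i = l).card : ℝ) /
        ((Finset.univ.filter fun i => c i = l).card : ℝ) =
        ((Finset.univ.filter fun i => g i = s).card : ℝ) / n)
      ↔ F0ᵀ * H = 0 := by
  obtain rfl : G = indicatorMatrix g := ext hG
  obtain rfl : H = indicatorMatrix c := ext hH
  obtain rfl : F0 = indicatorMatrix g - vecMulVec 1 z := ext fun i s => by simp [hF0]
  rw [transpose_sub_vecMulVec_one_mul, indicatorMatrix_transpose_mul_indicatorMatrix,
    one_vecMul_indicatorMatrix, ← Matrix.ext_iff]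
  refine forall₂_congr fun s l => ?_
  have hcluster : (0 : ℝ) < (Finset.univ.filter (c · = l)).card := by
    obtain ⟨i, rfl⟩ := hc l
    exact_mod_cast Finset.card_pos.2 ⟨i, by simp⟩
  have hzs : z s = (Finset.univ.filter (g · = s)).card / n := by
    rw [hz, mulVec_transpose]
    exact congrArg (· / (n : ℝ)) (congrFun (one_vecMul_indicatorMatrix g) s)
  simp only [Matrix.sub_apply, of_apply, vecMulVec_apply, Matrix.zero_apply, hzs]
  rw [div_eq_iff hcluster.ne', ← sub_eq_zero]

theorem stmt5 (n k h : ℕ) (hn : 0 < n)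
    (c : Fin n → Fin k) (hc : Function.Surjective c)
    (g : Fin n → Fin h) (hg : Function.Surjective g)
    (G : Matrix (Fin n) (Fin h) ℝ)
    (hG : ∀ i s, G i s = if g i = s then 1 else 0)
    (H : Matrix (Fin n) (Fin k) ℝ)
    (hH : ∀ i l, H i l = if c i = l then 1 else 0)
    (z : Fin h → ℝ) (hz : z = fun s => (Gᵀ.mulVec (fun _ => 1)) s / n)
    (F0 : Matrix (Fin n) (Fin h) ℝ)
    (hF0 : ∀ i s, F0 i s = G i s - z s) :
    (∀ s l, ((Finset.univ.filter fun i => g i = s ∧ c i = l).card : ℝ) /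
        ((Finset.univ.filter fun i => c i = l).card : ℝ) =
        ((Finset.univ.filter fun i => g i = s).card : ℝ) / n)
      ↔ F0ᵀ * H = 0 :=
  stmt5_general n k h c hc g G hG H hH z hz F0 hF0
end

section
/- (Ky Fan) For a real symmetric n×n matrix A, the minimum of trace(X^T A X) over all n×k real matrices X with X^T X = I_k equals the sum of the k smallest eigenvalues of A, and the minimum is attained by a matrix whose columns are orthonormal eigenvectors corresponding to these eigenvalues. -/
open Matrix

private lemma kyfan_weight_ineq (n k : ℕ) (hk : k ≤ n) (hk0 : 0 < k) (μ : Fin n → ℝ)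
    (hmono : Monotone μ)
    (t : Fin n → ℝ) (h0 : ∀ j, 0 ≤ t j) (h1 : ∀ j, t j ≤ 1) (hsum : ∑ j, t j = (k : ℝ)) :
    ∑ i : Fin k, μ (Fin.castLE hk i) ≤ ∑ j, t j * μ j := by
  have hkn : k - 1 < n := lt_of_lt_of_le (Nat.sub_lt hk0 one_pos) hk
  set m := μ ⟨k - 1, hkn⟩ with hm
  have hreidx : ∀ f : Fin n → ℝ,
      ∑ j : Fin n, (if (j : ℕ) < k then f j else 0) = ∑ i : Fin k, f (Fin.castLE hk i) := by
    intro f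
    rw [← Finset.sum_filter]
    rw [show (Finset.univ.filter (fun j : Fin n => (j : ℕ) < k))
        = Finset.univ.map (Fin.castLEEmb hk) from ?_, Finset.sum_map]
    · rfl
    · ext j
      simp only [Finset.mem_filter, Finset.mem_univ, true_and, Finset.mem_map,
        Fin.castLEEmb_apply]
      constructor
      · intro h; exact ⟨⟨j, h⟩, rfl⟩
      · rintro ⟨i, rfl⟩; exact i.2
  have key : ∀ j : Fin n,
      (t j - (if (j : ℕ) < k then 1 else 0)) * m
        ≤ t j * μ j - (if (j : ℕ) < k then μ j else 0) := by
    intro j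
    by_cases h : (j : ℕ) < k
    · simp only [h, if_true]
      have hj : μ j ≤ m := hmono (show j ≤ ⟨k - 1, hkn⟩ from Nat.le_sub_one_of_lt h)
      nlinarith [h1 j]
    · simp only [h, if_false]
      have hj : m ≤ μ j := hmono (show (⟨k - 1, hkn⟩ : Fin n) ≤ j from
        by rw [Fin.le_def]; exact le_trans (Nat.sub_le k 1) (not_lt.mp h))
      nlinarith [h0 j]
  have hsum2 := Finset.sum_le_sum (fun j (_ : j ∈ Finset.univ) => key j)
  rw [← Finset.sum_mul, Finset.sum_sub_distrib, Finset.sum_sub_distrib, hsum,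
    hreidx (fun _ => (1 : ℝ)), hreidx μ] at hsum2
  simp only [Finset.sum_const, Finset.card_univ, Fintype.card_fin, nsmul_eq_mul,
    mul_one, sub_self, zero_mul] at hsum2
  linarith

private lemma kyfan_trace_of_eig {n k : ℕ} (A : Matrix (Fin n) (Fin n) ℝ)
    (X : Matrix (Fin n) (Fin k) ℝ)
    (ν : Fin k → ℝ) (hX : Xᵀ * X = 1)
    (heig : ∀ i, A *ᵥ (fun j => X j i) = ν i • fun j => X j i) :
    (Xᵀ * A * X).trace = ∑ i, ν i := by
  have hAX : ∀ (j : Fin n) (i : Fin k), (A * X) j i = ν i * X j i := by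
    intro j i
    have := congrFun (heig i) j
    simpa [Matrix.mulVec, dotProduct, Matrix.mul_apply] using this
  have hdiag : ∀ i : Fin k, (Xᵀ * A * X) i i = ν i := by
    intro i
    have h1 : (Xᵀ * X) i i = 1 := by rw [hX]; simp [Matrix.one_apply]
    rw [Matrix.mul_assoc, Matrix.mul_apply]
    simp only [Matrix.transpose_apply, hAX]
    rw [Matrix.mul_apply] at h1
    simp only [Matrix.transpose_apply] at h1
    calc ∑ j, X j i * (ν i * X j i) = ν i * ∑ j, X j i * X j i := by
          rw [Finset.mul_sum]; congr 1; ext j; ring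
      _ = ν i := by rw [h1, mul_one]
  simp [Matrix.trace, Matrix.diag, hdiag]

private lemma kyfan_lower_aux (n k : ℕ)
    (A : Matrix (Fin n) (Fin n) ℝ)
    (U : Matrix (Fin n) (Fin n) ℝ) (lam : Fin n → ℝ)
    (hUUt : U * Uᵀ = 1)
    (hspec : A = U * Matrix.diagonal lam * Uᵀ)
    (X : Matrix (Fin n) (Fin k) ℝ) (hX : Xᵀ * X = 1) :
    ∃ s : Fin n → ℝ, (∀ j, 0 ≤ s j) ∧ (∀ j, s j ≤ 1) ∧ (∑ j, s j = (k : ℝ)) ∧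
      (Xᵀ * A * X).trace = ∑ j, lam j * s j := by
  have hYtY : (Uᵀ * X)ᵀ * (Uᵀ * X) = 1 := by
    rw [Matrix.transpose_mul, Matrix.transpose_transpose, Matrix.mul_assoc,
      ← Matrix.mul_assoc U, hUUt, Matrix.one_mul, hX]
  obtain ⟨Y, hYtY, hYdef⟩ : ∃ Y : Matrix (Fin n) (Fin k) ℝ, Yᵀ * Y = 1 ∧ Uᵀ * X = Y :=
    ⟨Uᵀ * X, hYtY, rfl⟩
  have hPsymm : (Y * Yᵀ)ᵀ = Y * Yᵀ := by
    rw [Matrix.transpose_mul, Matrix.transpose_transpose]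
  have hPP : (Y * Yᵀ) * (Y * Yᵀ) = Y * Yᵀ := by
    rw [Matrix.mul_assoc, ← Matrix.mul_assoc Yᵀ, hYtY, Matrix.one_mul]
  refine ⟨fun j => (Y * Yᵀ) j j, ?_, ?_, ?_, ?_⟩
  · intro j
    dsimp only
    rw [Matrix.mul_apply]
    exact Finset.sum_nonneg fun i _ => by simpa using mul_self_nonneg (Y j i)
  · intro j
    have h3 : 0 ≤ (Y * Yᵀ) j j := by
      rw [Matrix.mul_apply]
      exact Finset.sum_nonneg fun i _ => by simpa using mul_self_nonneg (Y j i)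
    have h1 : (Y * Yᵀ) j j = ∑ l, (Y * Yᵀ) j l * (Y * Yᵀ) j l := by
      conv_lhs => rw [← hPP]
      rw [Matrix.mul_apply]
      congr 1; ext l
      congr 1
      conv_lhs => rw [← hPsymm]
      rfl
    have h2 : (Y * Yᵀ) j j * (Y * Yᵀ) j j ≤ ∑ l, (Y * Yᵀ) j l * (Y * Yᵀ) j l :=
      Finset.single_le_sum (f := fun l => (Y * Yᵀ) j l * (Y * Yᵀ) j l)
        (fun l _ => mul_self_nonneg _) (Finset.mem_univ j)
    nlinarith [h1, h2, h3]
  · have : ∑ j, (Y * Yᵀ) j j = (Y * Yᵀ).trace := rfl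
    rw [this, Matrix.trace_mul_comm, hYtY, Matrix.trace_one]
    simp
  · have h4 : Xᵀ * A * X = Yᵀ * Matrix.diagonal lam * Y := by
      rw [hspec, ← hYdef, Matrix.transpose_mul, Matrix.transpose_transpose]
      simp only [Matrix.mul_assoc]
    rw [h4, Matrix.mul_assoc, Matrix.trace_mul_comm, Matrix.mul_assoc]
    simp [Matrix.trace, Matrix.diag, Matrix.diagonal_mul, Matrix.mul_assoc]

theorem stmt6 (n k : ℕ) (hk : k ≤ n) (hk0 : 0 < k)
    (A : Matrix (Fin n) (Fin n) ℝ) (hA : A.IsHermitian)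
    (μ : Fin n → ℝ) (hmono : Monotone μ)
    (hperm : ∃ e : Equiv.Perm (Fin n), ∀ i, μ i = hA.eigenvalues (e i)) :
    IsLeast {t : ℝ | ∃ X : Matrix (Fin n) (Fin k) ℝ, Xᵀ * X = 1 ∧ t = (Xᵀ * A * X).trace}
      (∑ i : Fin k, μ (Fin.castLE hk i)) ∧
    ∃ X : Matrix (Fin n) (Fin k) ℝ, Xᵀ * X = 1 ∧
      (∀ i : Fin k, A.mulVec (fun j => X j i) = μ (Fin.castLE hk i) • fun j => X j i) ∧
      (Xᵀ * A * X).trace = ∑ i : Fin k, μ (Fin.castLE hk i) := by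
  obtain ⟨e, he⟩ := hperm
  set U : Matrix (Fin n) (Fin n) ℝ := (hA.eigenvectorUnitary : Matrix (Fin n) (Fin n) ℝ)
    with hUdef
  have hstarU : star U = Uᵀ := by
    rw [Matrix.star_eq_conjTranspose, Matrix.conjTranspose_eq_transpose_of_trivial]
  have hUUt : U * Uᵀ = 1 := by
    have := (Matrix.mem_unitaryGroup_iff).mp hA.eigenvectorUnitary.2
    rwa [hstarU] at this
  have hspec : A = U * Matrix.diagonal hA.eigenvalues * Uᵀ := by
    have := hA.spectral_theorem
    rw [Unitary.conjStarAlgAut_apply] at this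
    rwa [hstarU, show (RCLike.ofReal ∘ hA.eigenvalues : Fin n → ℝ) = hA.eigenvalues by
      ext j; simp] at this
  -- the witness matrix of eigenvectors
  set X₀ : Matrix (Fin n) (Fin k) ℝ :=
    Matrix.of (fun j i => U j (e (Fin.castLE hk i))) with hXdef
  have hXX : X₀ᵀ * X₀ = 1 := by
    have hUtU : Uᵀ * U = 1 := mul_eq_one_comm.mp hUUt
    ext i i'
    rw [Matrix.mul_apply]
    have : ∑ j, X₀ᵀ i j * X₀ j i' = (Uᵀ * U) (e (Fin.castLE hk i)) (e (Fin.castLE hk i')) := by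
      rw [Matrix.mul_apply]
      simp [hXdef, Matrix.transpose_apply]
    rw [this, hUtU]
    simp only [Matrix.one_apply]
    congr 1
    simp [e.injective.eq_iff, (Fin.castLE_injective hk).eq_iff]
  have heig : ∀ i : Fin k, A *ᵥ (fun j => X₀ j i) = μ (Fin.castLE hk i) • fun j => X₀ j i := by
    intro i
    have hcol : (fun j => X₀ j i) = ⇑(hA.eigenvectorBasis (e (Fin.castLE hk i))) := by
      ext j; simp [hXdef, hUdef]
    rw [hcol, hA.mulVec_eigenvectorBasis, he]
  have htrace : (X₀ᵀ * A * X₀).trace = ∑ i : Fin k, μ (Fin.castLE hk i) :=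
    kyfan_trace_of_eig A X₀ _ hXX heig
  refine ⟨⟨⟨X₀, hXX, htrace.symm⟩, ?_⟩, ⟨X₀, hXX, heig, htrace⟩⟩
  rintro t ⟨X, hX, rfl⟩
  obtain ⟨s, hs0, hs1, hssum, htr⟩ := kyfan_lower_aux n k A U hA.eigenvalues hUUt hspec X hX
  rw [htr]
  calc ∑ i : Fin k, μ (Fin.castLE hk i)
      ≤ ∑ j, s (e j) * μ j :=
        kyfan_weight_ineq n k hk hk0 μ hmono (fun j => s (e j))
          (fun j => hs0 (e j)) (fun j => hs1 (e j))
          ((Equiv.sum_comp e s).trans hssum)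
    _ = ∑ j, s j * hA.eigenvalues j := by
        simp_rw [he]
        exact Equiv.sum_comp e (fun j => s j * hA.eigenvalues j)
    _ = ∑ j, hA.eigenvalues j * s j := by simp [mul_comm]
end

section
/- For any clustering V = C_1 ∪ ... ∪ C_k and group partition V = V_1 ∪ ... ∪ V_h (all intersections V_s ∩ C_ℓ non-empty), min_ℓ Balance(C_ℓ) ≤ min_{s≠s'} |V_s|/|V_{s'}|, where Balance(C_ℓ) = min_{s≠s'} |V_s ∩ C_ℓ|/|V_{s'} ∩ C_ℓ|. -/
/-!
Counting each group cluster by cluster gives |V_s| = ∑_ℓ |V_s ∩ C_ℓ|, so the global ratio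
|V_s| / |V_{s'}| is a mediant of the per-cluster ratios |V_s ∩ C_ℓ| / |V_{s'} ∩ C_ℓ| and so
dominates one of them, which in turn dominates that cluster's balance.
-/

namespace Finset

variable {ι K : Type*} [Field K] [LinearOrder K] [IsStrictOrderedRing K]

theorem exists_div_le_sum_div_sum {s : Finset ι} (hs : s.Nonempty) (a b : ι → K)
    (hb : ∀ i ∈ s, 0 < b i) :
    ∃ i ∈ s, a i / b i ≤ (∑ j ∈ s, a j) / ∑ j ∈ s, b j := by
  have hB : 0 < ∑ j ∈ s, b j := sum_pos hb hs
  obtain ⟨i, hi, hle⟩ := exists_le_of_sum_le hs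
    (f := fun i => a i * ∑ j ∈ s, b j) (g := fun i => (∑ j ∈ s, a j) * b i)
    (by rw [← sum_mul, ← mul_sum, mul_comm])
  exact ⟨i, hi, (div_le_div_iff₀ (hb i hi) hB).2 hle⟩

theorem card_filter_eq_sum_card_filter_and {α β : Type*} [Fintype α] [Fintype β]
    [DecidableEq β] (p : α → Prop) [DecidablePred p] (f : α → β) :
    #{i | p i} = ∑ b, #{i | p i ∧ f i = b} := by
  rw [card_eq_sum_card_fiberwise fun i _ => mem_univ (f i)]
  simp only [filter_filter]

end Finset

open Finset

theorem stmt15_general (n k h : ℕ)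
    (c : Fin n → Fin k) (g : Fin n → Fin h)
    (hne : ∀ (s : Fin h) (l : Fin k),
      ((Finset.univ.filter fun i => g i = s ∧ c i = l)).Nonempty)
    (hkne : (Finset.univ : Finset (Fin k)).Nonempty)
    (pairs : Finset (Fin h × Fin h))
    (hpne : pairs.Nonempty)
    (balance : Fin k → ℝ)
    (hbal : ∀ l, balance l = pairs.inf' hpne fun p =>
      ((Finset.univ.filter fun i => g i = p.1 ∧ c i = l).card : ℝ) /
      ((Finset.univ.filter fun i => g i = p.2 ∧ c i = l).card : ℝ)) :
    Finset.univ.inf' hkne balance ≤ pairs.inf' hpne fun p =>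
      ((Finset.univ.filter fun i => g i = p.1).card : ℝ) /
      ((Finset.univ.filter fun i => g i = p.2).card : ℝ) := by
  refine le_inf' _ _ fun p hp => ?_
  obtain ⟨l, -, hl⟩ := exists_div_le_sum_div_sum hkne
    (fun l => (#{i | g i = p.1 ∧ c i = l} : ℝ)) (fun l => (#{i | g i = p.2 ∧ c i = l} : ℝ))
    (fun l _ => by exact_mod_cast card_pos.2 (hne p.2 l))
  calc univ.inf' hkne balance ≤ balance l := inf'_le _ (mem_univ l)
    _ ≤ _ := hbal l ▸ inf'_le _ hp
    _ ≤ _ := hl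
    _ = _ := by
      rw [card_filter_eq_sum_card_filter_and (g · = p.1) c,
        card_filter_eq_sum_card_filter_and (g · = p.2) c, Nat.cast_sum, Nat.cast_sum]

theorem stmt15 (n k h : ℕ) (hh : 1 < h)
    (c : Fin n → Fin k) (g : Fin n → Fin h)
    (hne : ∀ (s : Fin h) (l : Fin k),
      ((Finset.univ.filter fun i => g i = s ∧ c i = l)).Nonempty)
    (hkne : (Finset.univ : Finset (Fin k)).Nonempty)
    (pairs : Finset (Fin h × Fin h))
    (hpairs : pairs = Finset.univ.filter fun p => p.1 ≠ p.2)
    (hpne : pairs.Nonempty)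
    (balance : Fin k → ℝ)
    (hbal : ∀ l, balance l = pairs.inf' hpne fun p =>
      ((Finset.univ.filter fun i => g i = p.1 ∧ c i = l).card : ℝ) /
      ((Finset.univ.filter fun i => g i = p.2 ∧ c i = l).card : ℝ)) :
    Finset.univ.inf' hkne balance ≤ pairs.inf' hpne fun p =>
      ((Finset.univ.filter fun i => g i = p.1).card : ℝ) /
      ((Finset.univ.filter fun i => g i = p.2).card : ℝ) :=
  stmt15_general n k h c g hne hkne pairs hpne balance hbal
end
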